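/- Let F : T → T' be an exact (triangulated) functor between triangulated categories such that the induced functor from the Verdier quotient T/Ker(F) to T' is full. If the essential image of F generates T' as a triangulated category (under shifts and cones), then F is essentially surjective. -/

import Mathlib

/-!
STATEMENT 1: If `F : T ⥤ T'` is an exact functor of triangulated categories such that
the induced functor `T/Ker(F) ⥤ T'` out of the Verdier quotient by the kernel of `F`
is full, and the essential image of `F` generates `T'` as a triangulated category,
then `F` is essentially surjective.
-/

open CategoryTheory Limits Pretriangulated

variable {T' : Type*} [Category T'] [HasZeroObject T'] [HasShift T' ℤ] [Preadditive T']
  [∀ n : ℤ, (CategoryTheory.shiftFunctor T' n).Additive] [Pretriangulated T']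

/-- The smallest class of objects containing `S` and closed under shifts and cones. -/
inductive TriangGen (S : Set T') : T' → Prop
  | of {X : T'} : X ∈ S → TriangGen S X
  | shift {X : T'} (n : ℤ) : TriangGen S X → TriangGen S (X⟦n⟧)
  | cone (Tr : Triangle T') : Tr ∈ (distTriang T') → TriangGen S Tr.obj₁ →
      TriangGen S Tr.obj₂ → TriangGen S Tr.obj₃

/-!
The essential image of `F` is closed under shifts since `F` commutes with them, so it suffices
to show that it is closed under cones. The morphisms inverted by a triangulated functor admit
a left calculus of fractions, and they are exactly those whose cone lies in `Ker F`. Hence,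
for a distinguished triangle `F X₁ ⟶ F X₂ ⟶ Y ⟶ (F X₁)⟦1⟧`, the first morphism, lifted along
the full functor `T/Ker F ⥤ T'`, is a fraction `F a ≫ (F s)⁻¹` with `a : X₁ ⟶ X₂'`. The
triangle is then isomorphic to the image of a triangle on `a`, so `Y` lies in the essential image.
-/

lemma TriangGen.induction {S : Set T'} {P : ObjectProperty T'} (hS : ∀ X ∈ S, P X)
    (hshift : ∀ (X : T') (n : ℤ), P X → P (X⟦n⟧))
    (hcone : ∀ Tr ∈ distTriang T', P Tr.obj₁ → P Tr.obj₂ → P Tr.obj₃)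
    {Y : T'} (hY : TriangGen S Y) : P Y := by
  induction hY with
  | of h => exact hS _ h
  | shift n _ ih => exact hshift _ n ih
  | cone Tr hTr _ _ ih₁ ih₂ => exact hcone Tr hTr ih₁ ih₂

namespace CategoryTheory.Functor

open MorphismProperty

lemma obj_shift_mem_essImage {C E : Type*} [Category C] [Category E] [HasShift C ℤ]
    [HasShift E ℤ] (F : C ⥤ E) [F.CommShift ℤ] {Y : E} (hY : F.essImage Y) (n : ℤ) :
    F.essImage (Y⟦n⟧) := by
  obtain ⟨X, ⟨e⟩⟩ := hY
  exact ⟨X⟦n⟧, ⟨(F.commShiftIso n).app X ≪≫ (shiftFunctor E n).mapIso e⟩⟩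

lemma exists_leftFraction_comp_map_s_eq_map_f {C D E : Type*} [Category C] [Category D]
    [Category E] (W : MorphismProperty C) [W.HasLeftCalculusOfFractions] (L : C ⥤ D)
    [L.IsLocalization W] {F : C ⥤ E} {F' : D ⥤ E} (e : L ⋙ F' ≅ F) [F'.Full] {X Y : C}
    (f : F.obj X ⟶ F.obj Y) :
    ∃ ψ : W.LeftFraction X Y, f ≫ F.map ψ.s = F.map ψ.f := by
  obtain ⟨φ, hφ⟩ := F'.map_surjective (e.hom.app X ≫ f ≫ e.inv.app Y)
  obtain ⟨ψ, rfl⟩ := Localization.exists_leftFraction L W φ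
  refine ⟨ψ, ?_⟩
  have hfac : F'.map (ψ.map L (Localization.inverts L W)) ≫ F'.map (L.map ψ.s) =
      F'.map (L.map ψ.f) := by
    rw [← F'.map_comp, ψ.map_comp_map_s]
  rw [hφ] at hfac
  rw [← NatIso.naturality_1 e ψ.s, ← NatIso.naturality_1 e ψ.f, comp_map, comp_map, ← hfac]
  simp

variable {T : Type*} [Category T] [HasZeroObject T] [HasShift T ℤ] [Preadditive T]
  [∀ n : ℤ, (shiftFunctor T n).Additive] [Pretriangulated T]
  (F : T ⥤ T') [F.CommShift ℤ] [F.IsTriangulated]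

lemma isIso_map_mor₁_iff {Tr : Triangle T} (hTr : Tr ∈ distTriang T) :
    IsIso (F.map Tr.mor₁) ↔ IsZero (F.obj Tr.obj₃) :=
  (Triangle.isZero₃_iff_isIso₁ _ (F.map_distinguished _ hTr)).symm

lemma isIso_map_mor₂_iff {Tr : Triangle T} (hTr : Tr ∈ distTriang T) :
    IsIso (F.map Tr.mor₂) ↔ IsZero (F.obj Tr.obj₁) :=
  (Triangle.isZero₁_iff_isIso₂ _ (F.map_distinguished _ hTr)).symm

lemma trW_eq_inverseImage_isomorphisms (K : ObjectProperty T)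
    (hK : ∀ X : T, K X ↔ IsZero (F.obj X)) :
    K.trW = (isomorphisms T').inverseImage F := by
  ext X Y g
  refine ⟨fun ⟨Z, _, _, hT, hZ⟩ ↦ (F.isIso_map_mor₁_iff hT).2 ((hK Z).1 hZ), fun hg ↦ ?_⟩
  obtain ⟨Z, g', h', hT⟩ := distinguished_cocone_triangle g
  exact ⟨Z, g', h', hT, (hK Z).2 ((F.isIso_map_mor₁_iff hT).1 hg)⟩

/-- Unlike Mathlib's instance for `P.trW`, this needs no octahedral axiom. -/
instance : ((isomorphisms T').inverseImage F).HasLeftCalculusOfFractions where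
  exists_leftFraction X Y φ := by
    obtain ⟨Z, g, h, hT⟩ := distinguished_cocone_triangle φ.s
    have hZ : IsZero (F.obj Z) := (F.isIso_map_mor₁_iff hT).1 φ.hs
    obtain ⟨Y', s', a, hT'⟩ := distinguished_cocone_triangle₂ (h ≫ φ.f⟦1⟧')
    obtain ⟨b, hb, -⟩ :=
      complete_distinguished_triangle_morphism₂ _ _ hT hT' φ.f (𝟙 Z) (Category.id_comp _).symm
    exact ⟨⟨b, s', (F.isIso_map_mor₁_iff hT').2 hZ⟩, hb.symm⟩
  ext X' X Y f₁ f₂ s hs hf := by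
    obtain ⟨Z, g, h, hT⟩ := distinguished_cocone_triangle s
    have hZ : IsZero (F.obj Z) := (F.isIso_map_mor₁_iff hT).1 hs
    have hzero : s ≫ (f₁ - f₂) = 0 := by rw [Preadditive.comp_sub, hf, sub_self]
    obtain ⟨q, hq⟩ : ∃ q : Z ⟶ Y, f₁ - f₂ = g ≫ q := Triangle.yoneda_exact₂ _ hT _ hzero
    obtain ⟨Y', r, t, hT'⟩ := distinguished_cocone_triangle q
    have hqr : q ≫ r = 0 := comp_distTriang_mor_zero₁₂ _ hT'
    refine ⟨Y', r, (F.isIso_map_mor₂_iff hT').2 hZ, ?_⟩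
    rw [← sub_eq_zero, ← Preadditive.sub_comp, hq, Category.assoc, hqr, comp_zero]

lemma mem_essImage_obj₃_of_iso {Tr : Triangle T'} (hTr : Tr ∈ distTriang T') {X Y : T}
    (a : X ⟶ Y) (e₁ : F.obj X ≅ Tr.obj₁) (e₂ : F.obj Y ≅ Tr.obj₂)
    (comm : F.map a ≫ e₂.hom = e₁.hom ≫ Tr.mor₁) : F.essImage Tr.obj₃ := by
  obtain ⟨Z, b, c, hT⟩ := distinguished_cocone_triangle a
  exact ⟨Z, ⟨Triangle.π₃.mapIso
    (isoTriangleOfIso₁₂ _ Tr (F.map_distinguished _ hT) hTr e₁ e₂ comm)⟩⟩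

lemma mem_essImage_obj₃ (hF : ∀ ⦃X Y : T⦄ (f : F.obj X ⟶ F.obj Y),
      ∃ ψ : ((isomorphisms T').inverseImage F).LeftFraction X Y, f ≫ F.map ψ.s = F.map ψ.f)
    {Tr : Triangle T'} (hTr : Tr ∈ distTriang T') (h₁ : F.essImage Tr.obj₁)
    (h₂ : F.essImage Tr.obj₂) : F.essImage Tr.obj₃ := by
  obtain ⟨X₁, ⟨e₁⟩⟩ := h₁
  obtain ⟨X₂, ⟨e₂⟩⟩ := h₂
  obtain ⟨ψ, hψ⟩ := hF (e₁.hom ≫ Tr.mor₁ ≫ e₂.inv)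
  have : IsIso (F.map ψ.s) := ψ.hs
  refine F.mem_essImage_obj₃_of_iso hTr ψ.f e₁ ((asIso (F.map ψ.s)).symm ≪≫ e₂) ?_
  simp [← hψ]

end CategoryTheory.Functor

theorem essSurj_of_full_on_quotient_of_generates
    {T : Type*} [Category T] [HasZeroObject T] [HasShift T ℤ] [Preadditive T]
    [∀ n : ℤ, (CategoryTheory.shiftFunctor T n).Additive] [Pretriangulated T]
    (F : T ⥤ T') [F.Additive] [F.CommShift ℤ] [F.IsTriangulated]
    -- `K` is the kernel of `F`, as a triangulated subcategory of `T`
    (K : ObjectProperty T) [K.IsTriangulated] (hK : ∀ X : T, K X ↔ IsZero (F.obj X))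
    -- the Verdier quotient `T/Ker F`, presented as a localization `L : T ⥤ D`
    -- with respect to the class `K.W` of morphisms whose cone lies in `K`
    {D : Type*} [Category D] (L : T ⥤ D) [L.IsLocalization K.trW]
    -- the induced functor `F' : T/Ker F ⥤ T'`, which is assumed to be full
    (F' : D ⥤ T') (e : L ⋙ F' ≅ F) (hfull : F'.Full)
    -- the essential image of `F` generates `T'` as a triangulated category
    (hgen : ∀ Y : T', TriangGen F.essImage Y) :
    F.EssSurj := by
  have : L.IsLocalization ((MorphismProperty.isomorphisms T').inverseImage F) :=
    F.trW_eq_inverseImage_isomorphisms K hK ▸ ‹_›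
  have hfac := fun X Y ↦ Functor.exists_leftFraction_comp_map_s_eq_map_f
    ((MorphismProperty.isomorphisms T').inverseImage F) L e (X := X) (Y := Y)
  exact ⟨fun Y ↦ (hgen Y).induction (P := F.essImage) (fun _ h ↦ h) (fun _ n h ↦ F.obj_shift_mem_essImage h n)
    (fun _ hTr h₁ h₂ ↦ F.mem_essImage_obj₃ hfac hTr h₁ h₂)⟩
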